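/- arXiv:2206.02969 — 3 statements merged into one kernel-verified Lean document; each statement's English description precedes it below -/
import Mathlib

section
/- Let m ≥ 1 be an integer, let n_1, …, n_m be nonnegative reals, and let t_1, …, t_m be positive reals such that for every i ∈ {1, …, m} one has Σ_{j=1}^i n_j ≤ t_i. Then Σ_{i=1}^m n_i / √(t_i) ≤ 2 √( Σ_{j=1}^m n_j ). In particular, if additionally Σ_{j=1}^m n_j ≤ T then Σ_{i=1}^m n_i / √(t_i) ≤ 2√T. -/
open Finset Real

/-!
Adding the terms in the order of the index, let `S` be the mass collected before term `a`.
Since `S + a ≤ t`, the term `a / √t` is at most `a / √(S + a) ≤ 2 (√(S + a) - √S)`, and these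
increments of `2√·` telescope to `2 √(∑ n)`.
-/

lemma div_sqrt_le_two_mul_sqrt_add_sub_sqrt {S a t : ℝ} (hS : 0 ≤ S) (ha : 0 ≤ a)
    (ht : S + a ≤ t) : a / √t ≤ 2 * (√(S + a) - √S) := by
  have hmono : √S ≤ √(S + a) := sqrt_le_sqrt (by linarith)
  rcases ha.eq_or_lt with rfl | ha
  · simp
  have hSa : 0 < √(S + a) := sqrt_pos.mpr (by linarith)
  have hdiff : (√(S + a) - √S) * (√(S + a) + √S) = a := by
    nlinarith [sq_sqrt hS, sq_sqrt (hS.trans (le_add_of_nonneg_right ha.le))]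
  calc a / √t ≤ a / √(S + a) := div_le_div_of_nonneg_left ha.le hSa (sqrt_le_sqrt ht)
    _ ≤ 2 * (√(S + a) - √S) := by
      rw [div_le_iff₀ hSa]
      nlinarith

theorem Finset.sum_div_sqrt_le_two_mul_sqrt_sum {ι : Type*} [LinearOrder ι] (s : Finset ι)
    {n t : ι → ℝ} (hn : ∀ i ∈ s, 0 ≤ n i) (ht : ∀ i ∈ s, ∑ j ∈ s with j ≤ i, n j ≤ t i) :
    ∑ i ∈ s, n i / √(t i) ≤ 2 * √(∑ i ∈ s, n i) := by
  induction s using Finset.induction_on_max with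
  | empty => simp
  | insert a s hlt ih =>
    have ha : a ∉ s := fun h => lt_irrefl a (hlt a h)
    have hfilter : ∀ i ∈ s, {j ∈ insert a s | j ≤ i} = {j ∈ s | j ≤ i} := fun i hi => by
      rw [filter_insert, if_neg (hlt i hi).not_ge]
    have hs : ∑ i ∈ s, n i / √(t i) ≤ 2 * √(∑ i ∈ s, n i) :=
      ih (fun i hi => hn i (mem_insert_of_mem hi))
        (fun i hi => hfilter i hi ▸ ht i (mem_insert_of_mem hi))
    have hle : ∀ j ∈ insert a s, j ≤ a := fun j hj =>
      (mem_insert.mp hj).elim le_of_eq fun h => (hlt j h).le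
    have hta : (∑ i ∈ s, n i) + n a ≤ t a := by
      simpa only [filter_true_of_mem hle, sum_insert ha, add_comm] using ht a (mem_insert_self a s)
    have hstep := div_sqrt_le_two_mul_sqrt_add_sub_sqrt
      (sum_nonneg fun i hi => hn i (mem_insert_of_mem hi)) (hn a (mem_insert_self a s)) hta
    rw [sum_insert ha, sum_insert ha, add_comm (n a)]
    linarith

theorem stmt5_general (m : ℕ) (n t : Fin m → ℝ)
    (hn : ∀ i, 0 ≤ n i)
    (hpartial : ∀ i : Fin m, (∑ j ∈ Finset.Iic i, n j) ≤ t i) :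
    (∑ i : Fin m, n i / Real.sqrt (t i)) ≤ 2 * Real.sqrt (∑ j : Fin m, n j) ∧
    ∀ T : ℝ, (∑ j : Fin m, n j) ≤ T →
      (∑ i : Fin m, n i / Real.sqrt (t i)) ≤ 2 * Real.sqrt T := by
  have hsum : ∑ i : Fin m, n i / √(t i) ≤ 2 * √(∑ j : Fin m, n j) :=
    univ.sum_div_sqrt_le_two_mul_sqrt_sum (fun i _ => hn i) fun i _ => by
      simpa only [filter_ge_eq_Iic] using hpartial i
  exact ⟨hsum, fun T hT => hsum.trans (by gcongr)⟩

/-- if `0 ≤ n_i`, `0 < t_i` and `Σ_{j ≤ i} n_j ≤ t_i` for every `i`, then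
`Σ_i n_i / √(t_i) ≤ 2 √(Σ_j n_j)`; in particular `Σ_i n_i / √(t_i) ≤ 2√T` whenever
`Σ_j n_j ≤ T`. -/
theorem stmt5 (m : ℕ) (hm : 1 ≤ m) (n t : Fin m → ℝ)
    (hn : ∀ i, 0 ≤ n i) (ht : ∀ i, 0 < t i)
    (hpartial : ∀ i : Fin m, (∑ j ∈ Finset.Iic i, n j) ≤ t i) :
    (∑ i : Fin m, n i / Real.sqrt (t i)) ≤ 2 * Real.sqrt (∑ j : Fin m, n j) ∧
    ∀ T : ℝ, (∑ j : Fin m, n j) ≤ T →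
      (∑ i : Fin m, n i / Real.sqrt (t i)) ≤ 2 * Real.sqrt T :=
  stmt5_general m n t hn hpartial
end

section
/- Let K ≥ 2 and T ≥ K be integers and let x ≥ 2K be a real number. For each k ∈ {2, …, K} let n_k ≥ 1 be an integer and Δ_k ∈ [0, 1] a real, and assume Σ_{k=2}^K n_k ≤ T. If Σ_{k=2}^K n_k Δ_k ≥ x (1 − 1/(2√K)), then there exists k ∈ {2, …, K} such that either (i) n_k ≤ 1 + T/K and (n_k − 1) Δ_k ≥ (x − 2K)/(4K), or (ii) n_k > 1 + T/K and Δ_k ≥ (x − 2K)/(4T). -/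
open Finset Real

/-! If no arm is a witness, each rarely-pulled arm contributes at most `(x - 2K)/(4K) + 1`
to the regret and each frequently-pulled arm at most `n_k (x - 2K)/(4T)`. Summing over the
`K - 1` arms and using `Σ n_k ≤ T` bounds the regret by `x/2 - 1`, while `1 - 1/(2√K) ≥ 1/2`. -/

lemma mul_le_of_not_split {n Δ τ a b : ℝ} (hn : 0 ≤ n) (hΔ : Δ ≤ 1) (ha : 0 ≤ a) (hb : 0 ≤ b)
    (h : ¬((n ≤ τ ∧ a ≤ (n - 1) * Δ) ∨ (τ < n ∧ b ≤ Δ))) :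
    n * Δ ≤ a + 1 + n * b := by
  push Not at h
  obtain ⟨hrare, hfrequent⟩ := h
  rcases le_or_gt n τ with hle | hlt
  · have := hrare hle
    linarith [mul_nonneg hn hb]
  · linarith [mul_le_mul_of_nonneg_left (hfrequent hlt).le hn]

lemma sum_mul_le_card_mul_add {ι : Type*} (s : Finset ι) (n Δ : ι → ℝ) {c b : ℝ}
    (h : ∀ k ∈ s, n k * Δ k ≤ c + n k * b) :
    ∑ k ∈ s, n k * Δ k ≤ #s * c + (∑ k ∈ s, n k) * b :=
  calc ∑ k ∈ s, n k * Δ k ≤ ∑ k ∈ s, (c + n k * b) := sum_le_sum h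
    _ = #s * c + (∑ k ∈ s, n k) * b := by
      rw [sum_add_distrib, sum_const, nsmul_eq_mul, sum_mul]

lemma half_le_one_sub_inv_two_sqrt {K : ℝ} (hK : 1 ≤ K) : 1 / 2 ≤ 1 - 1 / (2 * √K) := by
  have hsqrt : 1 ≤ √K := Real.one_le_sqrt.mpr hK
  have : 1 / (2 * √K) ≤ 1 / 2 := by gcongr; linarith
  linarith

lemma split_budget_lt {K T x : ℝ} (hK : 1 ≤ K) (hT : 0 < T) (hx : 2 * K ≤ x) :
    (K - 1) * ((x - 2 * K) / (4 * K) + 1) + T * ((x - 2 * K) / (4 * T))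
      < x * (1 - 1 / (2 * √K)) := by
  have hrare : (K - 1) * ((x - 2 * K) / (4 * K)) = (x - 2 * K) / 4 - (x - 2 * K) / (4 * K) := by
    field_simp
  have hrare_nonneg : 0 ≤ (x - 2 * K) / (4 * K) := div_nonneg (by linarith) (by positivity)
  have hfrequent : T * ((x - 2 * K) / (4 * T)) = (x - 2 * K) / 4 := by
    field_simp
  have hhalf := mul_le_mul_of_nonneg_left (half_le_one_sub_inv_two_sqrt hK) (by linarith : 0 ≤ x)
  linarith

theorem stmt6_general (K T : ℕ) (hK : 2 ≤ K) (hT : K ≤ T) (x : ℝ) (hx : 2 * (K : ℝ) ≤ x)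
    (n : ℕ → ℕ) (Δ : ℕ → ℝ)
    (hΔ : ∀ k ∈ Finset.Icc 2 K, Δ k ∈ Set.Icc (0 : ℝ) 1)
    (hntot : (∑ k ∈ Finset.Icc 2 K, (n k : ℝ)) ≤ T)
    (hreg : x * (1 - 1 / (2 * Real.sqrt K)) ≤ ∑ k ∈ Finset.Icc 2 K, (n k : ℝ) * Δ k) :
    ∃ k ∈ Finset.Icc 2 K,
      ((n k : ℝ) ≤ 1 + (T : ℝ) / K ∧ (x - 2 * K) / (4 * K) ≤ ((n k : ℝ) - 1) * Δ k) ∨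
      (1 + (T : ℝ) / K < (n k : ℝ) ∧ (x - 2 * K) / (4 * T) ≤ Δ k) := by
  by_contra hnone
  have hK1 : (1 : ℝ) ≤ K := by exact_mod_cast (by omega : 1 ≤ K)
  have hT0 : (0 : ℝ) < T := by exact_mod_cast (by omega : 0 < T)
  have hfrequent_nonneg : 0 ≤ (x - 2 * K) / (4 * T) := div_nonneg (by linarith) (by positivity)
  have harm : ∀ k ∈ Icc 2 K, (n k : ℝ) * Δ k
      ≤ ((x - 2 * K) / (4 * K) + 1) + n k * ((x - 2 * K) / (4 * T)) := fun k hk =>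
    mul_le_of_not_split (Nat.cast_nonneg _) (hΔ k hk).2
      (div_nonneg (by linarith) (by positivity)) hfrequent_nonneg fun h => hnone ⟨k, hk, h⟩
  have hcard : (#(Icc 2 K) : ℝ) = K - 1 := by
    rw [Nat.card_Icc, show K + 1 - 2 = K - 1 by omega, Nat.cast_sub (by omega), Nat.cast_one]
  have hsum := sum_mul_le_card_mul_add _ _ _ harm
  rw [hcard] at hsum
  have htotal := mul_le_mul_of_nonneg_right hntot hfrequent_nonneg
  linarith [split_budget_lt hK1 hT0 hx]

/-- the decomposition `eq:split-opt`: with `n_k` pulls and gaps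
`Δ_k ∈ [0,1]` for the suboptimal arms `k ∈ {2, …, K}`, if the pseudo-regret
`Σ_k n_k Δ_k` is at least `x(1 − 1/(2√K))` then some arm `k` satisfies either
(i) `n_k ≤ 1 + T/K` and `(n_k − 1)Δ_k ≥ (x − 2K)/(4K)`, or
(ii) `n_k > 1 + T/K` and `Δ_k ≥ (x − 2K)/(4T)`. -/
theorem stmt6 (K T : ℕ) (hK : 2 ≤ K) (hT : K ≤ T) (x : ℝ) (hx : 2 * (K : ℝ) ≤ x)
    (n : ℕ → ℕ) (Δ : ℕ → ℝ)
    (hn : ∀ k ∈ Finset.Icc 2 K, 1 ≤ n k)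
    (hΔ : ∀ k ∈ Finset.Icc 2 K, Δ k ∈ Set.Icc (0 : ℝ) 1)
    (hntot : (∑ k ∈ Finset.Icc 2 K, (n k : ℝ)) ≤ T)
    (hreg : x * (1 - 1 / (2 * Real.sqrt K)) ≤ ∑ k ∈ Finset.Icc 2 K, (n k : ℝ) * Δ k) :
    ∃ k ∈ Finset.Icc 2 K,
      ((n k : ℝ) ≤ 1 + (T : ℝ) / K ∧ (x - 2 * K) / (4 * K) ≤ ((n k : ℝ) - 1) * Δ k) ∨
      (1 + (T : ℝ) / K < (n k : ℝ) ∧ (x - 2 * K) / (4 * T) ≤ Δ k) :=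
  stmt6_general K T hK hT x hx n Δ hΔ hntot hreg
end

section
/- Let d ≥ 1 and T ≥ 2 be integers and let x ≥ 4√d be a real number. Let Δ_1, …, Δ_T be nonnegative reals with Δ_1 ≤ 2√d, and let w_2, …, w_T be positive reals with Σ_{t=2}^T w_t ≤ 2 d ln T. If Σ_{t=1}^T Δ_t ≥ x/2, then there exists t ∈ {2, …, T} such that either (i) w_t ≤ d/t and Δ_t ≥ (x − 4√d)/(4 t ln T), or (ii) w_t > d/t and Δ_t / w_t ≥ (x − 4√d)/(8 d ln T). -/
open Finset Real

/-! With `c = x - 4√d`, if no `t ≥ 2` qualifies then, whichever of `w_t ≤ d/t` or `w_t > d/t`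
holds, `Δ_t < c/(4 ln T) · t⁻¹ + c/(8 d ln T) · w_t`. Summing over `2 ≤ t ≤ T` with
`Σ t⁻¹ ≤ ln T` and `Σ w_t ≤ 2 d ln T` gives `Σ_{t ≥ 2} Δ_t < c/2`, and adding `Δ_1 ≤ 2√d`
yields `Σ Δ_t < x/2`. -/

lemma sum_Icc_two_inv_le_log (T : ℕ) : ∑ t ∈ Icc 2 T, (t : ℝ)⁻¹ ≤ log T := by
  rcases T.eq_zero_or_pos with rfl | hT
  · simp
  have h := harmonic_le_one_add_log T
  rw [harmonic_eq_sum_Icc, ← add_sum_Ioc_eq_sum_Icc hT, ← Icc_add_one_left_eq_Ioc] at h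
  push_cast at h
  linarith

lemma lt_add_mul_of_imp_lt_of_imp_div_lt {Δ w τ α β : ℝ} (hw : 0 < w) (hα : 0 ≤ α)
    (hβ : 0 ≤ β) (h₁ : w ≤ τ → Δ < α) (h₂ : τ < w → Δ / w < β) : Δ < α + β * w := by
  rcases le_or_gt w τ with hle | hlt
  · nlinarith [h₁ hle]
  · nlinarith [(div_lt_iff₀ hw).mp (h₂ hlt)]

lemma sum_Icc_two_lt_mul_log_add_mul {T : ℕ} (hT : 2 ≤ T) {Δ w : ℕ → ℝ} {α β W : ℝ}
    (hα : 0 ≤ α) (hβ : 0 ≤ β) (hwsum : ∑ t ∈ Icc 2 T, w t ≤ W)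
    (hΔ : ∀ t ∈ Icc 2 T, Δ t < α * (t : ℝ)⁻¹ + β * w t) :
    ∑ t ∈ Icc 2 T, Δ t < α * log T + β * W := calc
  ∑ t ∈ Icc 2 T, Δ t < ∑ t ∈ Icc 2 T, (α * (t : ℝ)⁻¹ + β * w t) :=
    sum_lt_sum_of_nonempty (nonempty_Icc.mpr hT) hΔ
  _ = α * ∑ t ∈ Icc 2 T, (t : ℝ)⁻¹ + β * ∑ t ∈ Icc 2 T, w t := by
    rw [sum_add_distrib, mul_sum, mul_sum]
  _ ≤ α * log T + β * W := by gcongr; exact sum_Icc_two_inv_le_log T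

theorem stmt10_general (d T : ℕ) (hd : 1 ≤ d) (hT : 2 ≤ T) (x : ℝ)
    (hx : 4 * Real.sqrt d ≤ x)
    (Δ w : ℕ → ℝ)
    (hΔ1 : Δ 1 ≤ 2 * Real.sqrt d)
    (hw : ∀ t ∈ Finset.Icc 2 T, 0 < w t)
    (hwsum : (∑ t ∈ Finset.Icc 2 T, w t) ≤ 2 * d * Real.log T)
    (hreg : x / 2 ≤ ∑ t ∈ Finset.Icc 1 T, Δ t) :
    ∃ t ∈ Finset.Icc 2 T,
      (w t ≤ (d : ℝ) / t ∧ (x - 4 * Real.sqrt d) / (4 * t * Real.log T) ≤ Δ t) ∨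
      ((d : ℝ) / t < w t ∧ (x - 4 * Real.sqrt d) / (8 * d * Real.log T) ≤ Δ t / w t) := by
  by_contra! hcon
  set c := x - 4 * √d
  have hc : 0 ≤ c := by linarith
  have hL : 0 < log T := log_pos (by exact_mod_cast hT)
  have hd₀ : (0 : ℝ) < d := by exact_mod_cast hd
  have hpointwise : ∀ t ∈ Icc 2 T,
      Δ t < c / (4 * log T) * (t : ℝ)⁻¹ + c / (8 * d * log T) * w t := by
    intro t ht
    exact lt_add_mul_of_imp_lt_of_imp_div_lt (hw t ht) (by positivity) (by positivity)
      (fun h => ((hcon t ht).1 h).trans_eq (by ring)) (hcon t ht).2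
  have htail := sum_Icc_two_lt_mul_log_add_mul hT (by positivity) (by positivity) hwsum hpointwise
  have hbound : c / (4 * log T) * log T + c / (8 * d * log T) * (2 * d * log T) = c / 2 := by
    field_simp; ring
  rw [← add_sum_Ioc_eq_sum_Icc (by omega), ← Icc_add_one_left_eq_Ioc] at hreg
  linarith

/-- the linear-bandit decomposition `eq:linear-decompose`: with
instantaneous regrets `Δ_t ≥ 0` (`Δ_1 ≤ 2√d`) and elliptic potentials `w_t > 0` satisfying
`Σ_{t=2}^T w_t ≤ 2d ln T`, if `Σ_{t=1}^T Δ_t ≥ x/2` then some `t ∈ {2, …, T}` satisfies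
either (i) `w_t ≤ d/t` and `Δ_t ≥ (x − 4√d)/(4t ln T)`, or
(ii) `w_t > d/t` and `Δ_t / w_t ≥ (x − 4√d)/(8d ln T)`. -/
theorem stmt10 (d T : ℕ) (hd : 1 ≤ d) (hT : 2 ≤ T) (x : ℝ)
    (hx : 4 * Real.sqrt d ≤ x)
    (Δ w : ℕ → ℝ)
    (hΔ : ∀ t ∈ Finset.Icc 1 T, 0 ≤ Δ t)
    (hΔ1 : Δ 1 ≤ 2 * Real.sqrt d)
    (hw : ∀ t ∈ Finset.Icc 2 T, 0 < w t)
    (hwsum : (∑ t ∈ Finset.Icc 2 T, w t) ≤ 2 * d * Real.log T)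
    (hreg : x / 2 ≤ ∑ t ∈ Finset.Icc 1 T, Δ t) :
    ∃ t ∈ Finset.Icc 2 T,
      (w t ≤ (d : ℝ) / t ∧ (x - 4 * Real.sqrt d) / (4 * t * Real.log T) ≤ Δ t) ∨
      ((d : ℝ) / t < w t ∧ (x - 4 * Real.sqrt d) / (8 * d * Real.log T) ≤ Δ t / w t) :=
  stmt10_general d T hd hT x hx Δ w hΔ1 hw hwsum hreg
end
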